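/- Let n ≥ 2 and let T = (Q, π, λ) be a synchronous transducer over Fin n that is synchronizing at level k with synchronizing map s and core. Define f_T : (Fin n)^ℕ → (Fin n)^ℕ by (f_T x) i = λ (x i) q_i, where q_i = s applied to the length-k word whose letters are x(i+k), x(i+k−1), …, x(i+1) in this order. Then f_T is continuous and f_T ∘ σ = σ ∘ f_T; that is, f_T is an endomorphism of the one-sided shift dynamical system. -/
import Mathlib


/-- The one-sided shift map on `(Fin n)^ℕ`: `(σ x) i = x (i+1)`. -/
def shiftMap (n : ℕ) : (ℕ → Fin n) → (ℕ → Fin n) := fun x i => x (i + 1)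

/-- `b` has orbit length exactly `N` under `f`: `N` is the least `L ≥ 1` with `f^[L] b = b`. -/
def HasOrbitLen {β : Type*} (f : β → β) (b : β) (N : ℕ) : Prop :=
  IsLeast {L : ℕ | 0 < L ∧ f^[L] b = b} N

/-- An automorphism of the one-sided shift: a homeomorphism commuting with the shift. -/
def IsShiftAut (n : ℕ) (φ : (ℕ → Fin n) ≃ₜ (ℕ → Fin n)) : Prop :=
  ⇑φ ∘ shiftMap n = shiftMap n ∘ ⇑φ

/-- `φ` has finite order. -/
def FiniteOrderAut (n : ℕ) (φ : (ℕ → Fin n) ≃ₜ (ℕ → Fin n)) : Prop :=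
  ∃ m : ℕ, 0 < m ∧ (⇑φ)^[m] = id

/-- Extension of the transition function of an automaton to words (letters read in order). -/
def transStar {n : ℕ} {Q : Type*} (π : Fin n → Q → Q) : List (Fin n) → Q → Q
  | [], q => q
  | x :: w, q => transStar π w (π x q)

/-- The automaton `(Q, π)` is synchronizing at level `k` with synchronizing map `s`. -/
def SyncAtLevelWith {n : ℕ} {Q : Type*} (π : Fin n → Q → Q) (k : ℕ)
    (s : List (Fin n) → Q) : Prop :=
  ∀ w : List (Fin n), w.length = k → ∀ q : Q, transStar π w q = s w

/-- The synchronizing map `s` at level `k` is surjective (the automaton is core). -/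
def CoreAt {n : ℕ} {Q : Type*} (s : List (Fin n) → Q) (k : ℕ) : Prop :=
  ∀ q : Q, ∃ w : List (Fin n), w.length = k ∧ s w = q

/-- An automorphism of the underlying digraph of the automaton `(Q, π)`. -/
structure DigraphAut {Q : Type*} (n : ℕ) (π : Fin n → Q → Q) where
  α : Q ≃ Q
  lab : Q → Equiv.Perm (Fin n)
  compat : ∀ (x : Fin n) (q : Q), π (lab q x) (α q) = α (π x q)

/-- Action of a digraph automorphism on the edge set `Q × Fin n`. -/
def edgeMap {Q : Type*} {n : ℕ} {π : Fin n → Q → Q} (Φ : DigraphAut n π) :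
    Q × Fin n → Q × Fin n :=
  fun e => (Φ.α e.1, Φ.lab e.1 e.2)

/-- The output word map `Λ` of a digraph automorphism. -/
def outWord {Q : Type*} {n : ℕ} (π : Fin n → Q → Q) (lab : Q → Equiv.Perm (Fin n)) :
    List (Fin n) → Q → List (Fin n)
  | [], _ => []
  | x :: w, q => lab q x :: outWord π lab w (π x q)

/-- Action of a digraph automorphism on based circuits: `(q, w) ↦ (α q, Λ(w, q))`. -/
def circMap {Q : Type*} {n : ℕ} {π : Fin n → Q → Q} (Φ : DigraphAut n π) :
    Q × List (Fin n) → Q × List (Fin n) :=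
  fun c => (Φ.α c.1, outWord π Φ.lab c.2 c.1)

/-- `(q, w)` is a based circuit: `w` nonempty and `π*(w, q) = q`. -/
def IsBasedCircuit {Q : Type*} {n : ℕ} (π : Fin n → Q → Q) (c : Q × List (Fin n)) : Prop :=
  c.2 ≠ [] ∧ transStar π c.2 c.1 = c.1

/-- The sliding block code induced by an automaton synchronizing at level `k`
with synchronizing map `s` and digraph automorphism with labelling `lab`:
`(F x) i = lab q_i (x i)` where `q_i = s [x(i+k), x(i+k-1), …, x(i+1)]`. -/
def inducedMap {Q : Type*} {n : ℕ} (k : ℕ) (s : List (Fin n) → Q)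
    (lab : Q → Equiv.Perm (Fin n)) : (ℕ → Fin n) → (ℕ → Fin n) :=
  fun x i => lab (s (List.ofFn fun j : Fin k => x (i + k - (j : ℕ)))) (x i)

/-- `(A, Φ)` (with `A` synchronizing and core) is a support of the shift automorphism `φ`. -/
def IsSupport {Q : Type*} (n : ℕ) (π : Fin n → Q → Q) (Φ : DigraphAut n π)
    (φ : (ℕ → Fin n) ≃ₜ (ℕ → Fin n)) : Prop :=
  ∃ (k : ℕ) (s : List (Fin n) → Q), SyncAtLevelWith π k s ∧ CoreAt s k ∧
    inducedMap k s Φ.lab = ⇑φ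

/-- The permutation automorphism of the shift induced by a permutation of `Fin n`. -/
def permAutMap {n : ℕ} (ρ : Equiv.Perm (Fin n)) : (ℕ → Fin n) → (ℕ → Fin n) :=
  fun x i => ρ (x i)

/-- `t` is heavy for `(A, Φ, N)` with divisibility constant `b`. -/
def Heavy {Q : Type*} {n : ℕ} (π : Fin n → Q → Q) (Φ : DigraphAut n π)
    (N b : ℕ) (t : Q) : Prop :=
  b ∣ N ∧ b ≠ N ∧ (∀ r : ℕ, HasOrbitLen (⇑Φ.α) t r → r ∣ b) ∧
  ∀ (q : Q) (x : Fin n), π x q = t →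
    ∀ L : ℕ, HasOrbitLen (edgeMap Φ) (q, x) L → Nat.lcm L b = N

/-- The map `f_T` induced by a synchronizing core synchronous transducer. -/
def transducerMap {Q : Type*} {n : ℕ} (k : ℕ) (s : List (Fin n) → Q)
    (lam : Fin n → Q → Fin n) : (ℕ → Fin n) → (ℕ → Fin n) :=
  fun x i => lam (x i) (s (List.ofFn fun j : Fin k => x (i + k - (j : ℕ))))

theorem transducer_induces_shift_endomorphism (n : ℕ) (hn : 2 ≤ n)
    (Q : Type) [Fintype Q] [Nonempty Q]
    (π : Fin n → Q → Q) (lam : Fin n → Q → Fin n)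
    (k : ℕ) (s : List (Fin n) → Q)
    (hsync : SyncAtLevelWith π k s) (hcore : CoreAt s k) :
    Continuous (transducerMap k s lam) ∧
      transducerMap k s lam ∘ shiftMap n = shiftMap n ∘ transducerMap k s lam := by
  constructor
  · apply continuous_pi
    intro i
    have h1 : Continuous (fun x : ℕ → Fin n => fun j : Fin (k + 1) => x (i + j)) :=
      continuous_pi fun j => continuous_apply _
    have h2 : Continuous (fun v : Fin (k + 1) → Fin n =>
        lam (v 0) (s (List.ofFn fun j : Fin k => v ⟨k - (j : ℕ), by omega⟩))) :=
      continuous_of_discreteTopology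
    have : (fun x : ℕ → Fin n => transducerMap k s lam x i) =
        (fun v : Fin (k + 1) → Fin n =>
          lam (v 0) (s (List.ofFn fun j : Fin k => v ⟨k - (j : ℕ), by omega⟩))) ∘
        (fun x : ℕ → Fin n => fun j : Fin (k + 1) => x (i + j)) := by
      funext x
      simp only [Function.comp, transducerMap]
      congr 2
      rw [List.ofFn_inj]
      funext j
      congr 1
      omega
    rw [this]
    exact h2.comp h1
  · funext x i
    simp only [Function.comp, transducerMap, shiftMap]
    congr 3
    funext j
    congr 1
    omega
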